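/- arXiv:2107.09218 — 3 statements merged into one kernel-verified Lean document; each statement's English description precedes it below -/
import Mathlib

section
/- For quantile-based global Fréchet regression with one-dimensional distribution responses: the minimizer over probability measures μ of (1/n)Σᵢ s_{iG}(x)·W₂²(μ, νᵢ) is the measure whose quantile function is the metric projection (in L²[0,1]) of (1/n)Σᵢ s_{iG}(x)·F_{νᵢ}⁻¹ onto the convex set Q of quantile functions, provided the weights satisfy (1/n)Σᵢ s_{iG}(x) = 1. -/
/-!
For probability measures on `[a, b]`, `W₂²(μ, ν) = ∫₀¹ (F_μ⁻¹ - F_ν⁻¹)²`: the quantile coupling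
`(F_μ⁻¹(U), F_ν⁻¹(U))` has joint survival function `min (μ (s, ∞)) (ν (t, ∞))`, which bounds that
of every coupling, and by Hoeffding's formula `E[(X - a)(Y - a)] = ∫∫ P(s < X, t < Y) ds dt` this
maximises the cross term of `E[(X - Y)²]` while the square terms only depend on the marginals.
Since the weights average to one, `(1/n) Σᵢ sᵢ (q - qᵢ)² = (q - q̄)² + ((1/n) Σᵢ sᵢ qᵢ² - q̄²)`
pointwise, with `q̄ = (1/n) Σᵢ sᵢ qᵢ`; so the objective is `‖F_μ⁻¹ - q̄‖²` plus a constant, and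
`F_μ⁻¹` ranges exactly over the quantile functions as `μ` ranges over measures on `[a, b]`.
-/

open MeasureTheory Set

/-- Squared 2-Wasserstein distance on ℝ via couplings. -/
noncomputable def W2sqR (μ ν : Measure ℝ) : ℝ :=
  sInf {c : ℝ | ∃ π : Measure (ℝ × ℝ), IsProbabilityMeasure π ∧
    π.map Prod.fst = μ ∧ π.map Prod.snd = ν ∧ c = ∫ x, (x.1 - x.2) ^ 2 ∂π}

/-- The left-continuous quantile function of a measure on ℝ. -/
noncomputable def quantileFn (μ : Measure ℝ) (s : ℝ) : ℝ :=
  sInf {x : ℝ | s ≤ (μ (Iic x)).toReal}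

/-- The set of quantile functions of probability measures supported in `[a,b]`. -/
def quantileSet (a b : ℝ) : Set (ℝ → ℝ) :=
  {g | ∃ μ : Measure ℝ, IsProbabilityMeasure μ ∧ μ (Icc a b)ᶜ = 0 ∧ g = quantileFn μ}

open ProbabilityTheory Filter

section Quantile

instance : IsProbabilityMeasure (volume.restrict (Ioo (0 : ℝ) 1)) := ⟨by simp⟩

variable {μ ν : Measure ℝ} [IsProbabilityMeasure μ] [IsProbabilityMeasure ν] {a b s t x : ℝ}

lemma quantileFn_le_iff (ht : t ∈ Ioo 0 1) : quantileFn μ t ≤ x ↔ t ≤ cdf μ x := by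
  have hq : quantileFn μ t = sInf {y | t ≤ cdf μ y} := by
    simp only [quantileFn, cdf_eq_real, measureReal_def]
  obtain ⟨y₁, hy₁⟩ := ((tendsto_cdf_atTop μ).eventually (lt_mem_nhds ht.2)).exists
  obtain ⟨y₀, hy₀⟩ := eventually_atBot.1 ((tendsto_cdf_atBot μ).eventually (gt_mem_nhds ht.1))
  have hne : {y | t ≤ cdf μ y}.Nonempty := ⟨y₁, hy₁.le⟩
  have hbdd : BddBelow {y | t ≤ cdf μ y} :=
    ⟨y₀, fun y hy => le_of_not_gt fun h => (hy₀ y h.le).not_ge hy⟩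
  rw [hq]
  refine ⟨fun h => (?_ : t ≤ cdf μ _).trans (monotone_cdf μ h), fun h => csInf_le hbdd h⟩
  -- the infimum is attained because the cdf is right-continuous
  refine ge_of_tendsto (((cdf μ).right_continuous _).mono Ioi_subset_Ici_self) ?_
  filter_upwards [self_mem_nhdsWithin] with y hy
  obtain ⟨z, hz, hzy⟩ := exists_lt_of_csInf_lt hne hy
  exact hz.trans (monotone_cdf μ hzy.le)

lemma lt_quantileFn_iff (ht : t ∈ Ioo 0 1) : x < quantileFn μ t ↔ cdf μ x < t := by
  simpa using (quantileFn_le_iff (μ := μ) (x := x) ht).not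

lemma monotoneOn_quantileFn : MonotoneOn (quantileFn μ) (Ioo 0 1) :=
  fun _ ht _ ht' htt' => (quantileFn_le_iff ht).2 (htt'.trans ((quantileFn_le_iff ht').1 le_rfl))

lemma aemeasurable_quantileFn : AEMeasurable (quantileFn μ) (volume.restrict (Ioo 0 1)) :=
  aemeasurable_restrict_of_monotoneOn measurableSet_Ioo monotoneOn_quantileFn

lemma quantileFn_mem_Icc (hμ : μ (Icc a b)ᶜ = 0) (ht : t ∈ Ioo 0 1) :
    quantileFn μ t ∈ Icc a b := by
  constructor
  · refine le_of_forall_lt fun x hx => (lt_quantileFn_iff ht).2 ?_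
    have : μ (Iic x) = 0 := measure_mono_null
      (fun y (hy : y ≤ x) (hy' : y ∈ Icc a b) => hy'.1.not_gt (hy.trans_lt hx)) hμ
    simpa [cdf_eq_real, measureReal_def, this] using ht.1
  · have : μ (Iic b) = 1 :=
      (prob_compl_eq_zero_iff measurableSet_Iic).1
      (measure_mono_null (fun y (hy : ¬y ≤ b) (hy' : y ∈ Icc a b) => hy hy'.2) hμ)
    exact (quantileFn_le_iff ht).2 (by simpa [cdf_eq_real, measureReal_def, this] using ht.2.le)

lemma memLp_quantileFn (hμ : μ (Icc a b)ᶜ = 0) (p : ENNReal) :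
    MemLp (quantileFn μ) p (volume.restrict (Ioo 0 1)) :=
  memLp_of_bounded (ae_restrict_of_forall_mem measurableSet_Ioo fun _ => quantileFn_mem_Icc hμ)
    aemeasurable_quantileFn.aestronglyMeasurable p

lemma setOf_lt_quantileFn_inter_Ioo : {u | x < quantileFn μ u} ∩ Ioo 0 1 = Ioo (cdf μ x) 1 := by
  ext u
  refine ⟨fun ⟨h, hu⟩ => ⟨(lt_quantileFn_iff hu).1 h, hu.2⟩, fun ⟨h, hu⟩ => ?_⟩
  have hu' : u ∈ Ioo 0 1 := ⟨(cdf_nonneg μ x).trans_lt h, hu⟩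
  exact ⟨(lt_quantileFn_iff hu').2 h, hu'⟩

lemma volume_Ioo_cdf : volume (Ioo (cdf μ x) 1) = μ (Ioi x) := by
  rw [Real.volume_Ioo, ← compl_Iic, prob_compl_eq_one_sub measurableSet_Iic, ← ofReal_cdf,
    ENNReal.ofReal_sub _ (cdf_nonneg μ x), ENNReal.ofReal_one]

lemma volume_restrict_setOf_lt_quantileFn :
    volume.restrict (Ioo 0 1) {u | x < quantileFn μ u} = μ (Ioi x) := by
  rw [Measure.restrict_apply' measurableSet_Ioo, setOf_lt_quantileFn_inter_Ioo, volume_Ioo_cdf]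

lemma volume_restrict_setOf_lt_quantileFn_and_lt_quantileFn :
    volume.restrict (Ioo 0 1) {u | s < quantileFn μ u ∧ t < quantileFn ν u} =
      min (μ (Ioi s)) (ν (Ioi t)) := by
  have hset : {u | s < quantileFn μ u ∧ t < quantileFn ν u} ∩ Ioo 0 1 =
      Ioo (cdf μ s) 1 ∩ Ioo (cdf ν t) 1 := by
    rw [← setOf_lt_quantileFn_inter_Ioo, ← setOf_lt_quantileFn_inter_Ioo]
    ext u; simp only [mem_inter_iff, mem_ofPred_eq]; tauto
  rw [Measure.restrict_apply' measurableSet_Ioo, hset, ← volume_Ioo_cdf, ← volume_Ioo_cdf]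
  rcases le_total (cdf μ s) (cdf ν t) with h | h
  · rw [inter_eq_right.2 (Ioo_subset_Ioo_left h),
      min_eq_right (measure_mono (Ioo_subset_Ioo_left h))]
  · rw [inter_eq_left.2 (Ioo_subset_Ioo_left h),
      min_eq_left (measure_mono (Ioo_subset_Ioo_left h))]

lemma map_quantileFn : (volume.restrict (Ioo 0 1)).map (quantileFn μ) = μ := by
  have : IsProbabilityMeasure ((volume.restrict (Ioo (0 : ℝ) 1)).map (quantileFn μ)) :=
    Measure.isProbabilityMeasure_map aemeasurable_quantileFn
  refine Measure.ext_of_Iic _ _ fun x => ?_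
  rw [← compl_Ioi, prob_compl_eq_one_sub measurableSet_Ioi, prob_compl_eq_one_sub measurableSet_Ioi,
    Measure.map_apply_of_aemeasurable aemeasurable_quantileFn measurableSet_Ioi]
  exact congrArg _ volume_restrict_setOf_lt_quantileFn

end Quantile

section Hoeffding

variable {π π' : Measure (ℝ × ℝ)} {a b : ℝ}

/-- Hoeffding's formula: both sides are the product measure of `{(p, (s, t)) | s < p.1 ∧ t < p.2}`,
computed by integrating in either order. -/
lemma lintegral_ofReal_mul_ofReal_eq_lintegral_survival [SFinite π] :
    ∫⁻ p, ENNReal.ofReal (p.1 - a) * ENNReal.ofReal (p.2 - a) ∂π =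
      ∫⁻ st, π {p | st.1 < p.1 ∧ st.2 < p.2}
        ∂(volume.restrict (Ioi a)).prod (volume.restrict (Ioi a)) := by
  set Q := (volume.restrict (Ioi a)).prod (volume.restrict (Ioi a))
  have hS : MeasurableSet {z : (ℝ × ℝ) × (ℝ × ℝ) | z.2.1 < z.1.1 ∧ z.2.2 < z.1.2} := by
    measurability
  have hIio : ∀ x, volume.restrict (Ioi a) (Iio x) = ENNReal.ofReal (x - a) := fun x => by
    rw [Measure.restrict_apply measurableSet_Iio, Iio_inter_Ioi, Real.volume_Ioo]
  calc ∫⁻ p, ENNReal.ofReal (p.1 - a) * ENNReal.ofReal (p.2 - a) ∂π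
      = (π.prod Q) {z | z.2.1 < z.1.1 ∧ z.2.2 < z.1.2} := by
        rw [Measure.prod_apply hS]
        exact lintegral_congr fun p => by
          rw [show Prod.mk p ⁻¹' _ = Iio p.1 ×ˢ Iio p.2 from rfl, Measure.prod_prod, hIio, hIio]
    _ = ∫⁻ st, π {p | st.1 < p.1 ∧ st.2 < p.2} ∂Q := Measure.prod_apply_symm hS

lemma integral_mul_le_of_survival_le [SFinite π] [SFinite π']
    (hπ : ∀ᵐ p ∂π, a ≤ p.1 ∧ a ≤ p.2) (hπ' : ∀ᵐ p ∂π', a ≤ p.1 ∧ a ≤ p.2)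
    (hint' : Integrable (fun p => (p.1 - a) * (p.2 - a)) π')
    (h : ∀ s t, π {p | s < p.1 ∧ t < p.2} ≤ π' {p | s < p.1 ∧ t < p.2}) :
    ∫ p, (p.1 - a) * (p.2 - a) ∂π ≤ ∫ p, (p.1 - a) * (p.2 - a) ∂π' := by
  have nonneg : ∀ ρ : Measure (ℝ × ℝ), (∀ᵐ p ∂ρ, a ≤ p.1 ∧ a ≤ p.2) →
      0 ≤ᵐ[ρ] fun p => (p.1 - a) * (p.2 - a) := fun ρ hρ => by
    filter_upwards [hρ] with p hp using mul_nonneg (sub_nonneg.2 hp.1) (sub_nonneg.2 hp.2)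
  have hofReal : ∀ ρ : Measure (ℝ × ℝ), (∀ᵐ p ∂ρ, a ≤ p.1 ∧ a ≤ p.2) →
      ∫⁻ p, ENNReal.ofReal ((p.1 - a) * (p.2 - a)) ∂ρ =
        ∫⁻ p, ENNReal.ofReal (p.1 - a) * ENNReal.ofReal (p.2 - a) ∂ρ := fun ρ hρ => by
    refine lintegral_congr_ae ?_
    filter_upwards [hρ] with p hp using ENNReal.ofReal_mul (sub_nonneg.2 hp.1)
  by_cases hint : Integrable (fun p => (p.1 - a) * (p.2 - a)) π
  · rw [← ENNReal.ofReal_le_ofReal_iff (integral_nonneg_of_ae (nonneg π' hπ')),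
      ofReal_integral_eq_lintegral_ofReal hint (nonneg π hπ),
      ofReal_integral_eq_lintegral_ofReal hint' (nonneg π' hπ'), hofReal π hπ, hofReal π' hπ',
      lintegral_ofReal_mul_ofReal_eq_lintegral_survival,
      lintegral_ofReal_mul_ofReal_eq_lintegral_survival]
    exact lintegral_mono fun st => h st.1 st.2
  · rw [integral_undef hint]
    exact integral_nonneg_of_ae (nonneg π' hπ')

lemma integral_sq_sub_eq [IsFiniteMeasure π] (hπ : ∀ᵐ p ∂π, p ∈ Icc a b ×ˢ Icc a b) :
    ∫ p, (p.1 - p.2) ^ 2 ∂π = ∫ x, (x - a) ^ 2 ∂π.map Prod.fst + ∫ y, (y - a) ^ 2 ∂π.map Prod.snd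
      - 2 * ∫ p, (p.1 - a) * (p.2 - a) ∂π := by
  have h₁ : MemLp (fun p : ℝ × ℝ => p.1 - a) 2 π :=
    (memLp_of_bounded (hπ.mono fun _ hp => hp.1) (by fun_prop) 2).sub (memLp_const a)
  have h₂ : MemLp (fun p : ℝ × ℝ => p.2 - a) 2 π :=
    (memLp_of_bounded (hπ.mono fun _ hp => hp.2) (by fun_prop) 2).sub (memLp_const a)
  have hsq : ∀ p : ℝ × ℝ,
      (p.1 - p.2) ^ 2 = ((p.1 - a) ^ 2 + (p.2 - a) ^ 2) - 2 * ((p.1 - a) * (p.2 - a)) :=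
    fun p => by ring
  simp_rw [hsq]
  have hsum : Integrable (fun p : ℝ × ℝ => (p.1 - a) ^ 2 + (p.2 - a) ^ 2) π :=
    h₁.integrable_sq.add h₂.integrable_sq
  have h₁₂ : Integrable (fun p : ℝ × ℝ => 2 * ((p.1 - a) * (p.2 - a))) π :=
    (h₁.integrable_mul h₂).const_mul 2
  rw [integral_sub hsum h₁₂, integral_add h₁.integrable_sq h₂.integrable_sq,
    integral_const_mul, integral_map measurable_fst.aemeasurable (by fun_prop),
    integral_map measurable_snd.aemeasurable (by fun_prop)]

lemma integral_sq_sub_le_of_survival_le [IsFiniteMeasure π] [IsFiniteMeasure π']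
    (hπ : ∀ᵐ p ∂π, p ∈ Icc a b ×ˢ Icc a b) (hπ' : ∀ᵐ p ∂π', p ∈ Icc a b ×ˢ Icc a b)
    (hfst : π'.map Prod.fst = π.map Prod.fst) (hsnd : π'.map Prod.snd = π.map Prod.snd)
    (h : ∀ s t, π {p | s < p.1 ∧ t < p.2} ≤ π' {p | s < p.1 ∧ t < p.2}) :
    ∫ p, (p.1 - p.2) ^ 2 ∂π' ≤ ∫ p, (p.1 - p.2) ^ 2 ∂π := by
  have lower : ∀ ρ : Measure (ℝ × ℝ), (∀ᵐ p ∂ρ, p ∈ Icc a b ×ˢ Icc a b) →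
      ∀ᵐ p ∂ρ, a ≤ p.1 ∧ a ≤ p.2 := fun ρ hρ => hρ.mono fun p hp => ⟨hp.1.1, hp.2.1⟩
  have hint' : Integrable (fun p => (p.1 - a) * (p.2 - a)) π' :=
    Integrable.of_mem_Icc 0 ((b - a) ^ 2) (by fun_prop) <| hπ'.mono fun p ⟨⟨h₁, h₁'⟩, ⟨h₂, h₂'⟩⟩ =>
      ⟨by nlinarith, by nlinarith⟩
  rw [integral_sq_sub_eq hπ, integral_sq_sub_eq hπ', hfst, hsnd]
  linarith [integral_mul_le_of_survival_le (lower π hπ) (lower π' hπ') hint' h]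

end Hoeffding

section ComonotoneCoupling

variable {μ ν : Measure ℝ}

noncomputable def comonotoneCoupling (μ ν : Measure ℝ) : Measure (ℝ × ℝ) :=
  (volume.restrict (Ioo 0 1)).map fun u => (quantileFn μ u, quantileFn ν u)

variable [IsProbabilityMeasure μ] [IsProbabilityMeasure ν]

lemma aemeasurable_quantileFn_prod :
    AEMeasurable (fun u => (quantileFn μ u, quantileFn ν u)) (volume.restrict (Ioo 0 1)) :=
  aemeasurable_quantileFn.prodMk aemeasurable_quantileFn

instance : IsProbabilityMeasure (comonotoneCoupling μ ν) :=
  Measure.isProbabilityMeasure_map aemeasurable_quantileFn_prod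

lemma map_fst_comonotoneCoupling : (comonotoneCoupling μ ν).map Prod.fst = μ := by
  rw [comonotoneCoupling, AEMeasurable.map_map_of_aemeasurable measurable_fst.aemeasurable
    aemeasurable_quantileFn_prod]
  exact map_quantileFn

lemma map_snd_comonotoneCoupling : (comonotoneCoupling μ ν).map Prod.snd = ν := by
  rw [comonotoneCoupling, AEMeasurable.map_map_of_aemeasurable measurable_snd.aemeasurable
    aemeasurable_quantileFn_prod]
  exact map_quantileFn

lemma comonotoneCoupling_setOf_lt_and_lt (s t : ℝ) :
    comonotoneCoupling μ ν {p | s < p.1 ∧ t < p.2} = min (μ (Ioi s)) (ν (Ioi t)) := by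
  rw [comonotoneCoupling, Measure.map_apply_of_aemeasurable aemeasurable_quantileFn_prod
    (by measurability)]
  exact volume_restrict_setOf_lt_quantileFn_and_lt_quantileFn

lemma integral_comonotoneCoupling :
    ∫ p, (p.1 - p.2) ^ 2 ∂comonotoneCoupling μ ν =
      ∫ t in Ioo 0 1, (quantileFn μ t - quantileFn ν t) ^ 2 :=
  integral_map aemeasurable_quantileFn_prod (by fun_prop)

end ComonotoneCoupling

section Coupling

variable {π : Measure (ℝ × ℝ)} {μ ν : Measure ℝ} {a b : ℝ}

lemma measure_setOf_lt_and_lt_le_min (hfst : π.map Prod.fst = μ) (hsnd : π.map Prod.snd = ν)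
    (s t : ℝ) : π {p | s < p.1 ∧ t < p.2} ≤ min (μ (Ioi s)) (ν (Ioi t)) := by
  rw [← hfst, ← hsnd, Measure.map_apply measurable_fst measurableSet_Ioi,
    Measure.map_apply measurable_snd measurableSet_Ioi]
  exact le_min (measure_mono fun p hp => hp.1) (measure_mono fun p hp => hp.2)

lemma ae_mem_Icc_prod_of_map (hfst : π.map Prod.fst = μ) (hsnd : π.map Prod.snd = ν)
    (hμ : μ (Icc a b)ᶜ = 0) (hν : ν (Icc a b)ᶜ = 0) : ∀ᵐ p ∂π, p ∈ Icc a b ×ˢ Icc a b := by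
  have h₁ : ∀ᵐ p ∂π, p.1 ∈ Icc a b :=
    ae_of_ae_map measurable_fst.aemeasurable (hfst ▸ mem_ae_iff.2 hμ)
  have h₂ : ∀ᵐ p ∂π, p.2 ∈ Icc a b :=
    ae_of_ae_map measurable_snd.aemeasurable (hsnd ▸ mem_ae_iff.2 hν)
  filter_upwards [h₁, h₂] with p hp₁ hp₂ using ⟨hp₁, hp₂⟩

/-- The comonotone coupling is optimal for the quadratic cost. -/
lemma W2sqR_eq_integral_quantileFn [IsProbabilityMeasure μ] [IsProbabilityMeasure ν]
    (hμ : μ (Icc a b)ᶜ = 0) (hν : ν (Icc a b)ᶜ = 0) :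
    W2sqR μ ν = ∫ t in Ioo 0 1, (quantileFn μ t - quantileFn ν t) ^ 2 := by
  refine IsLeast.csInf_eq ⟨⟨comonotoneCoupling μ ν, inferInstance, map_fst_comonotoneCoupling,
    map_snd_comonotoneCoupling, integral_comonotoneCoupling.symm⟩, ?_⟩
  rintro _ ⟨π, hπ, hfst, hsnd, rfl⟩
  rw [← integral_comonotoneCoupling]
  refine integral_sq_sub_le_of_survival_le (ae_mem_Icc_prod_of_map hfst hsnd hμ hν)
    (ae_mem_Icc_prod_of_map map_fst_comonotoneCoupling map_snd_comonotoneCoupling hμ hν)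
    (by rw [hfst, map_fst_comonotoneCoupling]) (by rw [hsnd, map_snd_comonotoneCoupling])
    fun s t => ?_
  rw [comonotoneCoupling_setOf_lt_and_lt]
  exact measure_setOf_lt_and_lt_le_min hfst hsnd s t

end Coupling

section FrechetObjective

variable {ι : Type*} {a b c : ℝ}

lemma mul_sum_mul_sq_sub_eq (I : Finset ι) (w y : ι → ℝ) (hc : c * ∑ i ∈ I, w i = 1) (x : ℝ) :
    c * ∑ i ∈ I, w i * (x - y i) ^ 2 =
      (x - c * ∑ i ∈ I, w i * y i) ^ 2 +
        (c * ∑ i ∈ I, w i * y i ^ 2 - (c * ∑ i ∈ I, w i * y i) ^ 2) := by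
  have hexp : ∑ i ∈ I, w i * (x - y i) ^ 2 =
      x ^ 2 * ∑ i ∈ I, w i - 2 * x * ∑ i ∈ I, w i * y i + ∑ i ∈ I, w i * y i ^ 2 := by
    simp only [Finset.mul_sum, ← Finset.sum_sub_distrib, ← Finset.sum_add_distrib]
    exact Finset.sum_congr rfl fun i _ => by ring
  rw [hexp]
  linear_combination x ^ 2 * hc

lemma mul_sum_mul_W2sqR_eq (I : Finset ι) (w : ι → ℝ) (hc : c * ∑ i ∈ I, w i = 1)
    (ν : ι → Measure ℝ) [∀ i, IsProbabilityMeasure (ν i)] (hν : ∀ i, ν i (Icc a b)ᶜ = 0)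
    (μ : Measure ℝ) [IsProbabilityMeasure μ] (hμ : μ (Icc a b)ᶜ = 0) :
    c * ∑ i ∈ I, w i * W2sqR μ (ν i) =
      (∫ t in Ioo 0 1, (quantileFn μ t - c * ∑ i ∈ I, w i * quantileFn (ν i) t) ^ 2) +
        ∫ t in Ioo 0 1, (c * ∑ i ∈ I, w i * quantileFn (ν i) t ^ 2 -
          (c * ∑ i ∈ I, w i * quantileFn (ν i) t) ^ 2) := by
  have hq := memLp_quantileFn hμ 2
  have hqi := fun i => memLp_quantileFn (hν i) 2
  have hmean : MemLp (fun t => c * ∑ i ∈ I, w i * quantileFn (ν i) t) 2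
      (volume.restrict (Ioo 0 1)) :=
    (memLp_finsetSum I fun i _ => (hqi i).const_mul (w i)).const_mul c
  have hvar : Integrable (fun t => c * ∑ i ∈ I, w i * quantileFn (ν i) t ^ 2 -
      (c * ∑ i ∈ I, w i * quantileFn (ν i) t) ^ 2) (volume.restrict (Ioo 0 1)) :=
    ((integrable_finsetSum I fun i _ => (hqi i).integrable_sq.const_mul (w i)).const_mul c).sub
      hmean.integrable_sq
  calc c * ∑ i ∈ I, w i * W2sqR μ (ν i)
      = ∫ t in Ioo 0 1, c * ∑ i ∈ I, w i * (quantileFn μ t - quantileFn (ν i) t) ^ 2 := by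
        have hint : ∀ i ∈ I, Integrable (fun t => w i * (quantileFn μ t - quantileFn (ν i) t) ^ 2)
            (volume.restrict (Ioo 0 1)) := fun i _ => (hq.sub (hqi i)).integrable_sq.const_mul (w i)
        rw [integral_const_mul, integral_finsetSum I hint]
        exact congrArg _ (Finset.sum_congr rfl fun i _ => by
          rw [integral_const_mul, W2sqR_eq_integral_quantileFn hμ (hν i)])
    _ = _ := by
        simp only [mul_sum_mul_sq_sub_eq I w _ hc]
        exact integral_add (hq.sub hmean).integrable_sq hvar

end FrechetObjective

theorem global_frechet_regression_quantile_general (a b : ℝ)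
    (n : ℕ) (s : Fin n → ℝ) (hs : (1 / (n : ℝ)) * ∑ i, s i = 1)
    (ν : Fin n → Measure ℝ) (hνp : ∀ i, IsProbabilityMeasure (ν i))
    (hνs : ∀ i, (ν i) (Icc a b)ᶜ = 0)
    (μStar : Measure ℝ) (hμp : IsProbabilityMeasure μStar)
    (hμs : μStar (Icc a b)ᶜ = 0) :
    (∀ μ : Measure ℝ, IsProbabilityMeasure μ → μ (Icc a b)ᶜ = 0 →
      (1 / (n : ℝ)) * ∑ i, s i * W2sqR μStar (ν i) ≤
      (1 / (n : ℝ)) * ∑ i, s i * W2sqR μ (ν i)) ↔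
    (∀ g ∈ quantileSet a b,
      (∫ t in Ioo (0:ℝ) 1,
        (quantileFn μStar t - (1 / (n : ℝ)) * ∑ i, s i * quantileFn (ν i) t) ^ 2) ≤
      (∫ t in Ioo (0:ℝ) 1,
        (g t - (1 / (n : ℝ)) * ∑ i, s i * quantileFn (ν i) t) ^ 2)) := by
  have objective (μ : Measure ℝ) (_ : IsProbabilityMeasure μ) (hμ : μ (Icc a b)ᶜ = 0) :=
    mul_sum_mul_W2sqR_eq Finset.univ s hs ν hνs μ hμ
  constructor
  · rintro hmin _ ⟨μ, hμp', hμs', rfl⟩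
    have := hmin μ hμp' hμs'
    rw [objective μStar hμp hμs, objective μ hμp' hμs'] at this
    linarith
  · intro hproj μ hμp' hμs'
    have := hproj _ ⟨μ, hμp', hμs', rfl⟩
    rw [objective μStar hμp hμs, objective μ hμp' hμs']
    linarith

/-- Quantile-based global Fréchet regression for one-dimensional distributional responses:
with weights `s_{iG}(x)` averaging to 1, a probability measure `μ*` on `[a,b]` minimizes
`(1/n)Σᵢ s_{iG}(x)·W₂²(μ, νᵢ)` over probability measures on `[a,b]` if and only if its
quantile function is the metric projection in `L²[0,1]` of the weighted average
`(1/n)Σᵢ s_{iG}(x)·F_{νᵢ}⁻¹` onto the convex set of quantile functions. -/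
theorem global_frechet_regression_quantile (a b : ℝ) (hab : a < b)
    (n : ℕ) (hn : 0 < n) (s : Fin n → ℝ) (hs : (1 / (n : ℝ)) * ∑ i, s i = 1)
    (ν : Fin n → Measure ℝ) (hνp : ∀ i, IsProbabilityMeasure (ν i))
    (hνs : ∀ i, (ν i) (Icc a b)ᶜ = 0)
    (μStar : Measure ℝ) (hμp : IsProbabilityMeasure μStar)
    (hμs : μStar (Icc a b)ᶜ = 0) :
    (∀ μ : Measure ℝ, IsProbabilityMeasure μ → μ (Icc a b)ᶜ = 0 →
      (1 / (n : ℝ)) * ∑ i, s i * W2sqR μStar (ν i) ≤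
      (1 / (n : ℝ)) * ∑ i, s i * W2sqR μ (ν i)) ↔
    (∀ g ∈ quantileSet a b,
      (∫ t in Ioo (0:ℝ) 1,
        (quantileFn μStar t - (1 / (n : ℝ)) * ∑ i, s i * quantileFn (ν i) t) ^ 2) ≤
      (∫ t in Ioo (0:ℝ) 1,
        (g t - (1 / (n : ℝ)) * ∑ i, s i * quantileFn (ν i) t) ^ 2)) :=
  global_frechet_regression_quantile_general a b n s hs ν hνp hνs μStar hμp hμs
end

section
/- Under the admissible-deformation setup, the weighted Fréchet objective satisfies the quadratic growth inequality: for every μ in the deformation class, E[s(X,x)·W₂²(μ,ν)] − E[s(X,x)·W₂²(μ_G(x),ν)] ≥ W₂²(μ, μ_G(x)), where μ_G(x) is the minimizer. -/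
open MeasureTheory ProbabilityTheory Set Filter

/-- Squared 2-Wasserstein distance via couplings. -/
noncomputable def W2sq {d : ℕ} (μ ν : Measure (EuclideanSpace ℝ (Fin d))) : ℝ :=
  sInf {c : ℝ | ∃ π : Measure (EuclideanSpace ℝ (Fin d) × EuclideanSpace ℝ (Fin d)),
    IsProbabilityMeasure π ∧ π.map Prod.fst = μ ∧ π.map Prod.snd = ν ∧
    c = ∫ x, ‖x.1 - x.2‖ ^ 2 ∂π}

/-- `T` is the gradient of a convex function on ℝ^d. -/
def IsGradientOfConvex {d : ℕ} (T : EuclideanSpace ℝ (Fin d) → EuclideanSpace ℝ (Fin d)) :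
    Prop :=
  ∃ φ : EuclideanSpace ℝ (Fin d) → ℝ, ConvexOn ℝ univ φ ∧ ∀ x, HasGradientAt φ (T x) x

/-- An admissible class of deformations relative to a base measure `ν₀`. -/
structure AdmissibleClass {d : ℕ} (ν₀ : Measure (EuclideanSpace ℝ (Fin d)))
    (𝒯 : Set (EuclideanSpace ℝ (Fin d) → EuclideanSpace ℝ (Fin d))) : Prop where
  id_mem : id ∈ 𝒯
  gradient : ∀ T ∈ 𝒯, IsGradientOfConvex T
  measurable : ∀ T ∈ 𝒯, Measurable T
  bijective : ∀ T ∈ 𝒯, Function.Bijective T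
  comp_inv_mem : ∀ Ti ∈ 𝒯, ∀ Tj ∈ 𝒯, Ti ∘ Function.invFun Tj ∈ 𝒯
  convex : ∀ T₁ ∈ 𝒯, ∀ T₂ ∈ 𝒯, ∀ a : ℝ, 0 ≤ a → a ≤ 1 →
    (fun w => a • T₁ w + (1 - a) • T₂ w) ∈ 𝒯
  compact : ∀ f : ℕ → (EuclideanSpace ℝ (Fin d) → EuclideanSpace ℝ (Fin d)),
    (∀ n, f n ∈ 𝒯) → ∃ g ∈ 𝒯, ∃ φ : ℕ → ℕ, StrictMono φ ∧
      Tendsto (fun n => ∫ w, ‖f (φ n) w - g w‖ ^ 2 ∂ν₀) atTop (nhds 0)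

/-! On the deformation class, `W₂²(T₁#ν₀, T₂#ν₀) = ∫ ‖T₁ - T₂‖² dν₀`: the map `T₂ ∘ T₁⁻¹` is the
gradient of a convex `ψ`, so `‖x‖² - 2ψ x` and `‖y‖² - 2ψ* y` are Kantorovich potentials that are
tight on the coupling `(T₁, T₂)#ν₀`. The objective `F T = E[s ‖T - T_ω‖²_{L²(ν₀)}]` is
therefore exactly quadratic along segments of the class,
`F (a T₀ + (1 - a) T_G) = a F T₀ + (1 - a) F T_G - a (1 - a) W₂²(T₀, T_G)`,
and minimality of `T_G` gives `(1 - a) W₂²(T₀, T_G) ≤ F T₀ - F T_G` for `a ∈ (0, 1]`;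
let `a → 0`. -/

open Function
open scoped InnerProductSpace

theorem Continuous.integrable_of_ae_mem_isCompact {X F : Type*} [TopologicalSpace X]
    [MeasurableSpace X] [OpensMeasurableSpace X] [T2Space X] [NormedAddCommGroup F]
    {μ : Measure X} [IsFiniteMeasure μ] {K : Set X} {f : X → F} (hf : Continuous f)
    (hK : IsCompact K) (hμK : ∀ᵐ x ∂μ, x ∈ K) : Integrable f μ := by
  rw [← Measure.restrict_eq_self_of_ae_mem hμK]
  exact hf.continuousOn.integrableOn_compact hK

theorem ConvexOn.add_le_of_hasFDerivAt {E : Type*} [NormedAddCommGroup E] [NormedSpace ℝ E]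
    {s : Set E} {φ : E → ℝ} {φ' : E →L[ℝ] ℝ} {x z : E} (hφ : ConvexOn ℝ s φ) (hz : z ∈ s)
    (hx : x ∈ s) (hφ' : HasFDerivAt φ φ' z) : φ z + φ' (x - z) ≤ φ x := by
  set L : ℝ →ᵃ[ℝ] E := AffineMap.lineMap z x
  have hderiv : HasDerivAt (φ ∘ L) (φ' (x - z)) 0 := by
    have hφ'' : HasFDerivAt φ φ' (L 0) := by simpa [L] using hφ'
    exact hφ''.comp_hasDerivAt (0 : ℝ) AffineMap.hasDerivAt_lineMap
  have hslope := (hφ.comp_affineMap L).le_slope_of_hasDerivAt (by simpa [L] using hz)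
    (by simpa [L] using hx) one_pos hderiv
  simp only [slope_def_field, comp_apply, L, AffineMap.lineMap_apply_zero,
    AffineMap.lineMap_apply_one, sub_zero, div_one] at hslope
  linarith

section Coupling

variable {X Y : Type*} [MeasurableSpace X] [MeasurableSpace Y] {μ : Measure X} {ν : Measure Y}
  {π π₀ : Measure (X × Y)} {g : X → ℝ} {h : Y → ℝ}

theorem integrable_add_comp_fst_snd (h₁ : π.map Prod.fst = μ) (h₂ : π.map Prod.snd = ν)
    (hg : Integrable g μ) (hh : Integrable h ν) : Integrable (fun p => g p.1 + h p.2) π := by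
  subst h₁ h₂
  exact (hg.comp_measurable measurable_fst).add (hh.comp_measurable measurable_snd)

theorem integral_add_comp_fst_snd (h₁ : π.map Prod.fst = μ) (h₂ : π.map Prod.snd = ν)
    (hg : Integrable g μ) (hh : Integrable h ν) :
    ∫ p, (g p.1 + h p.2) ∂π = ∫ x, g x ∂μ + ∫ y, h y ∂ν := by
  subst h₁ h₂
  have hg' : Integrable (fun p : X × Y => g p.1) π := hg.comp_measurable measurable_fst
  have hh' : Integrable (fun p : X × Y => h p.2) π := hh.comp_measurable measurable_snd
  rw [integral_add hg' hh',
    integral_map measurable_fst.aemeasurable hg.aestronglyMeasurable,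
    integral_map measurable_snd.aemeasurable hh.aestronglyMeasurable]

theorem integral_le_integral_of_tight_potentials (h₀₁ : π₀.map Prod.fst = μ)
    (h₀₂ : π₀.map Prod.snd = ν) (h₁ : π.map Prod.fst = μ) (h₂ : π.map Prod.snd = ν)
    {c : X × Y → ℝ} (hg : Integrable g μ) (hh : AEStronglyMeasurable h ν)
    (hc₀ : Integrable c π₀) (hc : Integrable c π)
    (hle : ∀ p, g p.1 + h p.2 ≤ c p) (htight : ∀ᵐ p ∂π₀, c p = g p.1 + h p.2) :
    ∫ p, c p ∂π₀ ≤ ∫ p, c p ∂π := by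
  have hh' : Integrable h ν := by
    subst h₀₁ h₀₂
    refine (integrable_map_measure hh measurable_snd.aemeasurable).2 ?_
    exact (hc₀.sub (hg.comp_measurable measurable_fst)).congr
      (htight.mono fun p hp => by simp [hp])
  calc ∫ p, c p ∂π₀ = ∫ p, (g p.1 + h p.2) ∂π₀ := integral_congr_ae htight
    _ = ∫ p, (g p.1 + h p.2) ∂π := by
      rw [integral_add_comp_fst_snd h₀₁ h₀₂ hg hh', integral_add_comp_fst_snd h₁ h₂ hg hh']
    _ ≤ ∫ p, c p ∂π := integral_mono (integrable_add_comp_fst_snd h₁ h₂ hg hh') hc hle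

theorem ae_mem_prod_of_map_fst_snd {M : Set X} {N : Set Y} (h₁ : π.map Prod.fst = μ)
    (h₂ : π.map Prod.snd = ν) (hμ : ∀ᵐ x ∂μ, x ∈ M) (hν : ∀ᵐ y ∂ν, y ∈ N) :
    ∀ᵐ p ∂π, p ∈ M ×ˢ N := by
  subst h₁ h₂
  exact (ae_of_ae_map measurable_fst.aemeasurable hμ).and
    (ae_of_ae_map measurable_snd.aemeasurable hν)

end Coupling

theorem norm_smul_add_one_sub_smul_sq {F : Type*} [NormedAddCommGroup F] [InnerProductSpace ℝ F]
    (a : ℝ) (u v : F) :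
    ‖a • u + (1 - a) • v‖ ^ 2 = a * ‖u‖ ^ 2 + (1 - a) * ‖v‖ ^ 2 - a * (1 - a) * ‖u - v‖ ^ 2 := by
  rw [norm_add_sq_real, norm_sub_sq_real, norm_smul, norm_smul, real_inner_smul_left,
    real_inner_smul_right, mul_pow, mul_pow, Real.norm_eq_abs, Real.norm_eq_abs, sq_abs, sq_abs]
  ring

theorem integral_norm_smul_add_one_sub_smul_sub_sq {α F : Type*} [MeasurableSpace α]
    [NormedAddCommGroup F] [InnerProductSpace ℝ F] {μ : Measure α} {f g h : α → F} (a : ℝ)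
    (hfh : Integrable (fun w => ‖f w - h w‖ ^ 2) μ) (hgh : Integrable (fun w => ‖g w - h w‖ ^ 2) μ)
    (hfg : Integrable (fun w => ‖f w - g w‖ ^ 2) μ) :
    ∫ w, ‖a • f w + (1 - a) • g w - h w‖ ^ 2 ∂μ =
      a * ∫ w, ‖f w - h w‖ ^ 2 ∂μ + (1 - a) * ∫ w, ‖g w - h w‖ ^ 2 ∂μ -
        a * (1 - a) * ∫ w, ‖f w - g w‖ ^ 2 ∂μ := by
  have hpt : ∀ w, ‖a • f w + (1 - a) • g w - h w‖ ^ 2 = a * ‖f w - h w‖ ^ 2 +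
      (1 - a) * ‖g w - h w‖ ^ 2 - a * (1 - a) * ‖f w - g w‖ ^ 2 := fun w => by
    rw [← sub_sub_sub_cancel_right (f w) (g w) (h w), ← norm_smul_add_one_sub_smul_sq]
    congr 2
    module
  simp_rw [hpt]
  rw [integral_sub (f := fun w => a * ‖f w - h w‖ ^ 2 + (1 - a) * ‖g w - h w‖ ^ 2)
      ((hfh.const_mul a).add (hgh.const_mul _)) (hfg.const_mul _),
    integral_add (hfh.const_mul a) (hgh.const_mul _), integral_const_mul, integral_const_mul,
    integral_const_mul]

theorem integral_mul_add_mul_sub {Ω : Type*} [MeasurableSpace Ω] {P : Measure Ω}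
    {s A B : Ω → ℝ} (hs : Integrable s P) (hA : Integrable (fun ω => s ω * A ω) P)
    (hB : Integrable (fun ω => s ω * B ω) P) (a b c : ℝ) :
    ∫ ω, s ω * (a * A ω + b * B ω - c) ∂P =
      a * ∫ ω, s ω * A ω ∂P + b * ∫ ω, s ω * B ω ∂P - c * ∫ ω, s ω ∂P := by
  have hpt : ∀ ω, s ω * (a * A ω + b * B ω - c) = a * (s ω * A ω) + b * (s ω * B ω) - c * s ω :=
    fun ω => by ring
  simp_rw [hpt]
  rw [integral_sub (f := fun ω => a * (s ω * A ω) + b * (s ω * B ω))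
      ((hA.const_mul a).add (hB.const_mul b)) (hs.const_mul c),
    integral_add (hA.const_mul a) (hB.const_mul b), integral_const_mul, integral_const_mul,
    integral_const_mul]

theorem le_sub_of_forall_le_convexComb {f₀ f₁ K : ℝ}
    (h : ∀ a ∈ Ioc (0 : ℝ) 1, f₁ ≤ a * f₀ + (1 - a) * f₁ - a * (1 - a) * K) : K ≤ f₀ - f₁ := by
  have hslope : ∀ a ∈ Ioc (0 : ℝ) 1, (1 - a) * K ≤ f₀ - f₁ := fun a ha => by
    have := h a ha
    exact le_of_mul_le_mul_left (by nlinarith) ha.1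
  have hlim : Tendsto (fun a : ℝ => (1 - a) * K) (nhdsWithin 0 (Ioi 0)) (nhds K) := by
    have : Continuous fun a : ℝ => (1 - a) * K := by fun_prop
    simpa using (this.tendsto 0).mono_left nhdsWithin_le_nhds
  exact le_of_tendsto hlim (eventually_of_mem (Ioc_mem_nhdsGT one_pos) hslope)

section Wasserstein

variable {d : ℕ}
local notation "E" => EuclideanSpace ℝ (Fin d)

theorem W2sq_eq_integral_of_forall_le {μ ν : Measure E} {π₀ : Measure (E × E)}
    [IsProbabilityMeasure π₀] (h₁ : π₀.map Prod.fst = μ) (h₂ : π₀.map Prod.snd = ν)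
    (hle : ∀ π : Measure (E × E), IsProbabilityMeasure π → π.map Prod.fst = μ →
      π.map Prod.snd = ν → ∫ p, ‖p.1 - p.2‖ ^ 2 ∂π₀ ≤ ∫ p, ‖p.1 - p.2‖ ^ 2 ∂π) :
    W2sq μ ν = ∫ p, ‖p.1 - p.2‖ ^ 2 ∂π₀ :=
  IsLeast.csInf_eq ⟨⟨π₀, ‹_›, h₁, h₂, rfl⟩, by
    rintro _ ⟨π, hπ, hπ₁, hπ₂, rfl⟩
    exact hle π hπ hπ₁ hπ₂⟩

theorem exists_measurable_conjugate_of_hasGradientAt {T₁ T₂ : E → E} (hT₁ : Measurable T₁)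
    (hT₂ : Measurable T₂) (hT₂bij : Bijective T₂) {ψ : E → ℝ} (hψ : ConvexOn ℝ univ ψ)
    (hψc : Continuous ψ) (hgrad : ∀ w, HasGradientAt ψ (T₂ w) (T₁ w)) :
    ∃ η : E → ℝ, Measurable η ∧ (∀ x w, ⟪x, T₂ w⟫_ℝ ≤ ψ x + η (T₂ w)) ∧
      ∀ w, η (T₂ w) = ⟪T₁ w, T₂ w⟫_ℝ - ψ (T₁ w) := by
  have hT₂emb := hT₂.measurableEmbedding hT₂bij.injective
  -- the convex conjugate of `ψ`, evaluated through `∇ψ (T₁ w) = T₂ w`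
  set η : E → ℝ := fun y => ⟪T₁ (hT₂emb.invFun y), y⟫_ℝ - ψ (T₁ (hT₂emb.invFun y))
  have hη_T₂ : ∀ w, η (T₂ w) = ⟪T₁ w, T₂ w⟫_ℝ - ψ (T₁ w) := fun w => by
    simp only [η, hT₂emb.leftInverse_invFun w]
  refine ⟨η, ?_, fun x w => ?_, hη_T₂⟩
  · have := hT₁.comp hT₂emb.measurable_invFun
    fun_prop
  · have := hψ.add_le_of_hasFDerivAt (mem_univ _) (mem_univ x)
      (hasGradientAt_iff_hasFDerivAt.1 (hgrad w))
    rw [InnerProductSpace.toDual_apply_apply, inner_sub_right] at this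
    rw [hη_T₂]
    linarith [real_inner_comm x (T₂ w), real_inner_comm (T₁ w) (T₂ w)]

theorem W2sq_map_eq_integral_of_hasGradientAt {ν₀ : Measure E} [IsProbabilityMeasure ν₀]
    {M : Set E} (hM : IsCompact M) (hν₀M : ∀ᵐ w ∂ν₀, w ∈ M) {T₁ T₂ : E → E}
    (hT₁ : Measurable T₁) (hT₂ : Measurable T₂) (hT₂bij : Bijective T₂)
    (hT₁M : MapsTo T₁ M M) (hT₂M : MapsTo T₂ M M) {ψ : E → ℝ} (hψ : ConvexOn ℝ univ ψ)
    (hgrad : ∀ w, HasGradientAt ψ (T₂ w) (T₁ w)) :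
    W2sq (ν₀.map T₁) (ν₀.map T₂) = ∫ w, ‖T₁ w - T₂ w‖ ^ 2 ∂ν₀ := by
  have hpair : Measurable fun w => (T₁ w, T₂ w) := hT₁.prodMk hT₂
  set π₀ := ν₀.map fun w => (T₁ w, T₂ w)
  have : IsProbabilityMeasure π₀ := Measure.isProbabilityMeasure_map hpair.aemeasurable
  have h₀₁ : π₀.map Prod.fst = ν₀.map T₁ := by rw [Measure.map_map measurable_fst hpair]; rfl
  have h₀₂ : π₀.map Prod.snd = ν₀.map T₂ := by rw [Measure.map_map measurable_snd hpair]; rfl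
  have hμ₁ : ∀ᵐ x ∂ν₀.map T₁, x ∈ M :=
    (ae_map_iff hT₁.aemeasurable hM.measurableSet).2 (hν₀M.mono hT₁M)
  have hμ₂ : ∀ᵐ y ∂ν₀.map T₂, y ∈ M :=
    (ae_map_iff hT₂.aemeasurable hM.measurableSet).2 (hν₀M.mono hT₂M)
  have hc : Continuous fun p : E × E => ‖p.1 - p.2‖ ^ 2 := by fun_prop
  rw [← integral_map hpair.aemeasurable hc.aestronglyMeasurable]
  refine W2sq_eq_integral_of_forall_le h₀₁ h₀₂ fun π _ h₁ h₂ => ?_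
  have hψc : Continuous ψ := continuousOn_univ.1 (by simpa using hψ.continuousOn_interior)
  obtain ⟨η, hη, hyoung, hη_T₂⟩ :=
    exists_measurable_conjugate_of_hasGradientAt hT₁ hT₂ hT₂bij hψ hψc hgrad
  refine integral_le_integral_of_tight_potentials (g := fun x => ‖x‖ ^ 2 - 2 * ψ x)
    (h := fun y => ‖y‖ ^ 2 - 2 * η y) h₀₁ h₀₂ h₁ h₂
    ((by fun_prop : Continuous fun x : E => ‖x‖ ^ 2 - 2 * ψ x).integrable_of_ae_mem_isCompact
      hM hμ₁) (by fun_prop)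
    (hc.integrable_of_ae_mem_isCompact (hM.prod hM) (ae_mem_prod_of_map_fst_snd h₀₁ h₀₂ hμ₁ hμ₂))
    (hc.integrable_of_ae_mem_isCompact (hM.prod hM) (ae_mem_prod_of_map_fst_snd h₁ h₂ hμ₁ hμ₂))
    ?_ ?_
  · rintro ⟨x, y⟩
    obtain ⟨w, rfl⟩ := hT₂bij.surjective y
    have := hyoung x w
    rw [norm_sub_sq_real]
    linarith
  · refine (ae_map_iff hpair.aemeasurable (measurableSet_eq_fun hc.measurable
      (by fun_prop))).2 (ae_of_all _ fun w => ?_)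
    simp only [hη_T₂, norm_sub_sq_real]
    ring

theorem integrable_norm_sub_sq_of_mapsTo {ν₀ : Measure E} [IsFiniteMeasure ν₀] {M : Set E}
    (hM : IsCompact M) (hν₀M : ∀ᵐ w ∂ν₀, w ∈ M) {T₁ T₂ : E → E} (hT₁ : Measurable T₁)
    (hT₂ : Measurable T₂) (hT₁M : MapsTo T₁ M M) (hT₂M : MapsTo T₂ M M) :
    Integrable (fun w => ‖T₁ w - T₂ w‖ ^ 2) ν₀ := by
  have hpair : Measurable fun w => (T₁ w, T₂ w) := hT₁.prodMk hT₂
  have hc : Continuous fun p : E × E => ‖p.1 - p.2‖ ^ 2 := by fun_prop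
  refine (integrable_map_measure hc.aestronglyMeasurable hpair.aemeasurable).1
    (hc.integrable_of_ae_mem_isCompact (hM.prod hM) ?_)
  exact (ae_map_iff hpair.aemeasurable (hM.prod hM).measurableSet).2
    (hν₀M.mono fun w hw => ⟨hT₁M hw, hT₂M hw⟩)

namespace AdmissibleClass

theorem W2sq_map_eq_integral {ν₀ : Measure E} [IsProbabilityMeasure ν₀] {𝒯 : Set (E → E)}
    {M : Set E} (h𝒯 : AdmissibleClass ν₀ 𝒯) (hM : IsCompact M) (hν₀M : ∀ᵐ w ∂ν₀, w ∈ M)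
    (hrange : ∀ T ∈ 𝒯, MapsTo T M M) {T₁ T₂ : E → E} (hT₁ : T₁ ∈ 𝒯) (hT₂ : T₂ ∈ 𝒯) :
    W2sq (ν₀.map T₁) (ν₀.map T₂) = ∫ w, ‖T₁ w - T₂ w‖ ^ 2 ∂ν₀ := by
  obtain ⟨ψ, hψ, hgrad⟩ := h𝒯.gradient _ (h𝒯.comp_inv_mem T₂ hT₂ T₁ hT₁)
  refine W2sq_map_eq_integral_of_hasGradientAt hM hν₀M (h𝒯.measurable T₁ hT₁)
    (h𝒯.measurable T₂ hT₂) (h𝒯.bijective T₂ hT₂) (hrange T₁ hT₁) (hrange T₂ hT₂) hψ fun w => ?_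
  simpa [leftInverse_invFun (h𝒯.bijective T₁ hT₁).injective w] using hgrad (T₁ w)

theorem W2sq_map_smul_add_one_sub_smul {ν₀ : Measure E} [IsProbabilityMeasure ν₀]
    {𝒯 : Set (E → E)} {M : Set E} (h𝒯 : AdmissibleClass ν₀ 𝒯) (hM : IsCompact M)
    (hν₀M : ∀ᵐ w ∂ν₀, w ∈ M) (hrange : ∀ T ∈ 𝒯, MapsTo T M M) {T₀ T₁ T' : E → E}
    (hT₀ : T₀ ∈ 𝒯) (hT₁ : T₁ ∈ 𝒯) (hT' : T' ∈ 𝒯) {a : ℝ} (ha₀ : 0 ≤ a) (ha₁ : a ≤ 1) :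
    W2sq (ν₀.map fun w => a • T₀ w + (1 - a) • T₁ w) (ν₀.map T') =
      a * W2sq (ν₀.map T₀) (ν₀.map T') + (1 - a) * W2sq (ν₀.map T₁) (ν₀.map T') -
        a * (1 - a) * W2sq (ν₀.map T₀) (ν₀.map T₁) := by
  have hint : ∀ {S S'}, S ∈ 𝒯 → S' ∈ 𝒯 → Integrable (fun w => ‖S w - S' w‖ ^ 2) ν₀ :=
    fun hS hS' => integrable_norm_sub_sq_of_mapsTo hM hν₀M (h𝒯.measurable _ hS)
      (h𝒯.measurable _ hS') (hrange _ hS) (hrange _ hS')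
  simp only [h𝒯.W2sq_map_eq_integral hM hν₀M hrange (h𝒯.convex T₀ hT₀ T₁ hT₁ a ha₀ ha₁) hT',
    h𝒯.W2sq_map_eq_integral hM hν₀M hrange hT₀ hT', h𝒯.W2sq_map_eq_integral hM hν₀M hrange hT₁ hT',
    h𝒯.W2sq_map_eq_integral hM hν₀M hrange hT₀ hT₁]
  exact integral_norm_smul_add_one_sub_smul_sub_sq a (hint hT₀ hT') (hint hT₁ hT') (hint hT₀ hT₁)

end AdmissibleClass

end Wasserstein

theorem frechet_objective_quadratic_growth_general {d : ℕ} {Ω : Type*} [MeasureSpace Ω]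
    (M : Set (EuclideanSpace ℝ (Fin d))) (hMc : IsCompact M)
    (ν₀ : Measure (EuclideanSpace ℝ (Fin d))) [IsProbabilityMeasure ν₀]
    (hsupp : ν₀ Mᶜ = 0)
    (𝒯 : Set (EuclideanSpace ℝ (Fin d) → EuclideanSpace ℝ (Fin d)))
    (h𝒯 : AdmissibleClass ν₀ 𝒯) (hrange : ∀ T ∈ 𝒯, MapsTo T M M)
    (T : Ω → EuclideanSpace ℝ (Fin d) → EuclideanSpace ℝ (Fin d))
    (hT : ∀ ω, T ω ∈ 𝒯)
    (s : Ω → ℝ) (hs : Integrable s ℙ) (hs1 : ∫ ω, s ω ∂(ℙ : Measure Ω) = 1)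
    (hobj : ∀ T₀ ∈ 𝒯, Integrable
      (fun ω => s ω * W2sq (ν₀.map T₀) (ν₀.map (T ω))) ℙ)
    (TG : EuclideanSpace ℝ (Fin d) → EuclideanSpace ℝ (Fin d)) (hTG : TG ∈ 𝒯)
    (hTGmin : ∀ T₀ ∈ 𝒯,
      (∫ ω, s ω * W2sq (ν₀.map TG) (ν₀.map (T ω)) ∂(ℙ : Measure Ω)) ≤
      (∫ ω, s ω * W2sq (ν₀.map T₀) (ν₀.map (T ω)) ∂(ℙ : Measure Ω))) :
    ∀ T₀ ∈ 𝒯,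
      W2sq (ν₀.map T₀) (ν₀.map TG) ≤
        (∫ ω, s ω * W2sq (ν₀.map T₀) (ν₀.map (T ω)) ∂(ℙ : Measure Ω)) -
        (∫ ω, s ω * W2sq (ν₀.map TG) (ν₀.map (T ω)) ∂(ℙ : Measure Ω)) := by
  intro T₀ hT₀
  have hν₀M : ∀ᵐ w ∂ν₀, w ∈ M := ae_iff.2 hsupp
  refine le_sub_of_forall_le_convexComb fun a ha => ?_
  calc _ ≤ ∫ ω, s ω * W2sq (ν₀.map fun w => a • T₀ w + (1 - a) • TG w) (ν₀.map (T ω)) ∂ℙ :=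
        hTGmin _ (h𝒯.convex T₀ hT₀ TG hTG a ha.1.le ha.2)
    _ = ∫ ω, s ω * (a * W2sq (ν₀.map T₀) (ν₀.map (T ω)) + (1 - a) * W2sq (ν₀.map TG)
          (ν₀.map (T ω)) - a * (1 - a) * W2sq (ν₀.map T₀) (ν₀.map TG)) ∂ℙ := by
      simp only [h𝒯.W2sq_map_smul_add_one_sub_smul hMc hν₀M hrange hT₀ hTG (hT _) ha.1.le ha.2]
    _ = _ := by rw [integral_mul_add_mul_sub hs (hobj T₀ hT₀) (hobj TG hTG), hs1, mul_one]

/-- Quadratic growth of the weighted Fréchet objective at the conditional barycenter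
within an admissible deformation class: for every `μ = T₀#ν₀` in the class,
`E[s(X,x)·W₂²(μ,ν)] − E[s(X,x)·W₂²(μ_G(x),ν)] ≥ W₂²(μ, μ_G(x))`,
where `μ_G(x) = T_G#ν₀` is the minimizer. -/
theorem frechet_objective_quadratic_growth {d : ℕ} {Ω : Type*} [MeasureSpace Ω]
    [IsProbabilityMeasure (ℙ : Measure Ω)]
    (M : Set (EuclideanSpace ℝ (Fin d))) (hMc : IsCompact M) (hMconv : Convex ℝ M)
    (ν₀ : Measure (EuclideanSpace ℝ (Fin d))) [IsProbabilityMeasure ν₀]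
    (hac : ν₀ ≪ volume) (hsupp : ν₀ Mᶜ = 0)
    (𝒯 : Set (EuclideanSpace ℝ (Fin d) → EuclideanSpace ℝ (Fin d)))
    (h𝒯 : AdmissibleClass ν₀ 𝒯) (hrange : ∀ T ∈ 𝒯, MapsTo T M M)
    (T : Ω → EuclideanSpace ℝ (Fin d) → EuclideanSpace ℝ (Fin d))
    (hT : ∀ ω, T ω ∈ 𝒯)
    (s : Ω → ℝ) (hs : Integrable s ℙ) (hs1 : ∫ ω, s ω ∂(ℙ : Measure Ω) = 1)
    (hsT : ∀ w, Integrable (fun ω => s ω • T ω w) ℙ)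
    (hobj : ∀ T₀ ∈ 𝒯, Integrable
      (fun ω => s ω * W2sq (ν₀.map T₀) (ν₀.map (T ω))) ℙ)
    (TG : EuclideanSpace ℝ (Fin d) → EuclideanSpace ℝ (Fin d)) (hTG : TG ∈ 𝒯)
    (hTGmin : ∀ T₀ ∈ 𝒯,
      (∫ ω, s ω * W2sq (ν₀.map TG) (ν₀.map (T ω)) ∂(ℙ : Measure Ω)) ≤
      (∫ ω, s ω * W2sq (ν₀.map T₀) (ν₀.map (T ω)) ∂(ℙ : Measure Ω))) :
    ∀ T₀ ∈ 𝒯,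
      W2sq (ν₀.map T₀) (ν₀.map TG) ≤
        (∫ ω, s ω * W2sq (ν₀.map T₀) (ν₀.map (T ω)) ∂(ℙ : Measure Ω)) -
        (∫ ω, s ω * W2sq (ν₀.map TG) (ν₀.map (T ω)) ∂(ℙ : Measure Ω)) :=
  frechet_objective_quadratic_growth_general M hMc ν₀ hsupp 𝒯 h𝒯 hrange T hT s hs hs1 hobj TG hTG
    hTGmin
end

section
/- For measures μ, ν on a compact set M ⊂ ℝ^d with bounded densities f_μ, f_ν, W₂²(μ,ν) ≤ C(‖f_μ − f_ν‖_∞ + ‖f_μ − f_ν‖_∞²) for a constant C depending only on M. -/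
open MeasureTheory Set

/-! Keep the common part `min(fμ, fν)` of the two measures on the diagonal and couple the two
excesses `(fμ - fν)⁺` and `(fν - fμ)⁺`, which have the same mass `m`, independently. Only the
independent part moves mass, each unit by at most `diam M`, so `W₂² ≤ diam(M)² · m`; and
`m ≤ λ(M) · ‖fμ - fν‖_∞` since `(fμ - fν)⁺ ≤ ‖fμ - fν‖_∞` on `M`. -/

open scoped ENNReal

namespace MeasureTheory.Measure

variable {α : Type*} [MeasurableSpace α]

/-- When `ρ₁ univ = 0` the factor `(ρ₁ univ)⁻¹` is `∞`, but then `ρ₁.prod ρ₂ = 0`. -/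
noncomputable def commonPartCoupling (η ρ₁ ρ₂ : Measure α) : Measure (α × α) :=
  η.map Function.diag + (ρ₁ univ)⁻¹ • ρ₁.prod ρ₂

section Marginals

variable {η ρ₁ ρ₂ : Measure α} [IsFiniteMeasure ρ₁] [IsFiniteMeasure ρ₂]

theorem map_fst_commonPartCoupling (h : ρ₁ univ = ρ₂ univ) :
    (commonPartCoupling η ρ₁ ρ₂).map Prod.fst = η + ρ₁ := by
  rw [commonPartCoupling, Measure.map_add _ _ measurable_fst, Measure.map_smul,
    Measure.map_map measurable_fst measurable_diag, Function.fst_comp_diag, map_id,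
    map_fst_prod, ← h, smul_smul]
  rcases eq_or_ne (ρ₁ univ) 0 with h0 | h0
  · simp [measure_univ_eq_zero.1 h0]
  · rw [ENNReal.inv_mul_cancel h0 (measure_ne_top _ _), one_smul]

theorem map_snd_commonPartCoupling (h : ρ₁ univ = ρ₂ univ) :
    (commonPartCoupling η ρ₁ ρ₂).map Prod.snd = η + ρ₂ := by
  rw [commonPartCoupling, Measure.map_add _ _ measurable_snd, Measure.map_smul,
    Measure.map_map measurable_snd measurable_diag, Function.snd_comp_diag, map_id, map_snd_prod,
    smul_smul]
  rcases eq_or_ne (ρ₁ univ) 0 with h0 | h0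
  · simp [measure_univ_eq_zero.1 (h ▸ h0)]
  · rw [ENNReal.inv_mul_cancel h0 (measure_ne_top _ _), one_smul]

end Marginals

theorem lintegral_dist_sq_commonPartCoupling_le {X : Type*} [PseudoMetricSpace X]
    [MeasurableSpace X] {η ρ₁ ρ₂ : Measure X} [IsFiniteMeasure ρ₁] [IsFiniteMeasure ρ₂]
    (h : ρ₁ univ = ρ₂ univ) {K : Set X} (hK : Bornology.IsBounded K)
    (h₁ : ρ₁ Kᶜ = 0) (h₂ : ρ₂ Kᶜ = 0) :
    ∫⁻ p, ENNReal.ofReal (dist p.1 p.2 ^ 2) ∂(commonPartCoupling η ρ₁ ρ₂) ≤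
      ENNReal.ofReal (Metric.diam K ^ 2) * ρ₁ univ := by
  have hK2 : ∀ᵐ p ∂(ρ₁.prod ρ₂), p ∈ K ×ˢ K := by
    change (ρ₁.prod ρ₂) (K ×ˢ K)ᶜ = 0
    rw [compl_prod_eq_union, measure_union_null_iff, prod_prod, prod_prod, h₁, h₂]
    simp
  have hprod : ∫⁻ p, ENNReal.ofReal (dist p.1 p.2 ^ 2) ∂(ρ₁.prod ρ₂) ≤
      ENNReal.ofReal (Metric.diam K ^ 2) * (ρ₁ univ * ρ₁ univ) := by
    calc _ ≤ ∫⁻ _, ENNReal.ofReal (Metric.diam K ^ 2) ∂(ρ₁.prod ρ₂) := by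
          refine lintegral_mono_ae (hK2.mono fun p hp => ?_)
          gcongr
          exact Metric.dist_le_diam_of_mem hK hp.1 hp.2
      _ = _ := by rw [lintegral_const, ← univ_prod_univ, prod_prod, ← h]
  calc _ ≤ ∫⁻ x, ENNReal.ofReal (dist x x ^ 2) ∂η +
        (ρ₁ univ)⁻¹ * ∫⁻ p, ENNReal.ofReal (dist p.1 p.2 ^ 2) ∂(ρ₁.prod ρ₂) := by
        rw [commonPartCoupling, lintegral_add_measure, lintegral_smul_measure, smul_eq_mul]
        gcongr
        exact lintegral_map_le _ _
    _ ≤ (ρ₁ univ)⁻¹ * (ENNReal.ofReal (Metric.diam K ^ 2) * (ρ₁ univ * ρ₁ univ)) := by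
        simp only [dist_self, ne_eq, OfNat.ofNat_ne_zero, not_false_eq_true, zero_pow,
          ENNReal.ofReal_zero, lintegral_const, zero_mul, zero_add]
        gcongr
    _ = _ := by
        rcases eq_or_ne (ρ₁ univ) 0 with h0 | h0
        · simp [h0]
        · rw [mul_left_comm, ← mul_assoc (ρ₁ univ)⁻¹,
            ENNReal.inv_mul_cancel h0 (measure_ne_top _ _), one_mul]

end MeasureTheory.Measure

namespace MeasureTheory

variable {α : Type*} [MeasurableSpace α] {ξ : Measure α}

theorem withDensity_inf_add_withDensity_tsub {f g : α → ℝ≥0∞} (hf : Measurable f)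
    (hg : Measurable g) : ξ.withDensity (f ⊓ g) + ξ.withDensity (f - g) = ξ.withDensity f := by
  rw [← withDensity_add_left (hf.inf hg)]
  congr 1
  funext x
  exact (add_comm _ _).trans tsub_add_min

theorem withDensity_tsub_apply_univ_le {f g : α → ℝ≥0∞} {K : Set α} (hK : MeasurableSet K)
    (hfK : ξ.withDensity f Kᶜ = 0) {c : ℝ≥0∞} (hfg : ∀ᵐ x ∂ξ.restrict K, f x ≤ g x + c) :
    ξ.withDensity (f - g) univ ≤ c * ξ K := by
  have hK' : ξ.withDensity (f - g) Kᶜ = 0 :=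
    Measure.absolutelyContinuous_of_le
      (withDensity_mono (ae_of_all _ fun _ => tsub_le_self)) hfK
  calc ξ.withDensity (f - g) univ ≤ ξ.withDensity (f - g) K := by
        simpa [hK'] using measure_univ_le_add_compl (μ := ξ.withDensity (f - g)) K
    _ = ∫⁻ x in K, (f - g) x ∂ξ := withDensity_apply _ hK
    _ ≤ ∫⁻ _ in K, c ∂ξ := lintegral_mono_ae (hfg.mono fun _ hx => tsub_le_iff_left.2 hx)
    _ = c * ξ K := setLIntegral_const K c

/-- The densities `f`, `g` need not be measurable; their Radon-Nikodym representatives are. -/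
theorem ae_rnDeriv_le_rnDeriv_add_of_withDensity [SigmaFinite ξ] {μ ν : Measure α}
    [μ.HaveLebesgueDecomposition ξ] [ν.HaveLebesgueDecomposition ξ] {f g : α → ℝ≥0∞}
    (hμ : μ = ξ.withDensity f) (hν : ν = ξ.withDensity g) {K : Set α} (hK : MeasurableSet K)
    {c : ℝ≥0∞} (hfg : ∀ x ∈ K, f x ≤ g x + c) :
    ∀ᵐ x ∂ξ.restrict K, μ.rnDeriv ξ x ≤ ν.rnDeriv ξ x + c := by
  have hμac : μ ≪ ξ := hμ ▸ withDensity_absolutelyContinuous _ _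
  have hνac : ν ≪ ξ := hν ▸ withDensity_absolutelyContinuous _ _
  refine ae_le_of_forall_setLIntegral_le_of_sigmaFinite (Measure.measurable_rnDeriv _ _)
    fun s hs _ => ?_
  have hsK := hs.inter hK
  rw [Measure.restrict_restrict hs,
    lintegral_add_right _ measurable_const, Measure.setLIntegral_rnDeriv' hμac hsK,
    Measure.setLIntegral_rnDeriv' hνac hsK, hμ, hν, withDensity_apply _ hsK,
    withDensity_apply _ hsK, ← lintegral_add_right _ measurable_const]
  exact setLIntegral_mono' hsK fun x hx => hfg x hx.2

end MeasureTheory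

section Wasserstein

variable {d : ℕ} {μ ν : Measure (EuclideanSpace ℝ (Fin d))}

theorem W2sq_le_integral {π : Measure (EuclideanSpace ℝ (Fin d) × EuclideanSpace ℝ (Fin d))}
    [IsProbabilityMeasure π] (h₁ : π.map Prod.fst = μ) (h₂ : π.map Prod.snd = ν) :
    W2sq μ ν ≤ ∫ x, ‖x.1 - x.2‖ ^ 2 ∂π :=
  csInf_le ⟨0, by rintro c ⟨π, -, -, -, rfl⟩; positivity⟩ ⟨π, ‹_›, h₁, h₂, rfl⟩

theorem W2sq_le_diam_sq_mul_of_add_eq [IsProbabilityMeasure μ] [IsProbabilityMeasure ν]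
    {η ρ₁ ρ₂ : Measure (EuclideanSpace ℝ (Fin d))} (hμ : η + ρ₁ = μ) (hν : η + ρ₂ = ν)
    {K : Set (EuclideanSpace ℝ (Fin d))} (hK : Bornology.IsBounded K) (hμK : μ Kᶜ = 0)
    (hνK : ν Kᶜ = 0) :
    W2sq μ ν ≤ Metric.diam K ^ 2 * (ρ₁ univ).toReal := by
  have hρ₁ : ρ₁ ≤ μ := hμ ▸ Measure.le_add_left le_rfl
  have hρ₂ : ρ₂ ≤ ν := hν ▸ Measure.le_add_left le_rfl
  have : IsFiniteMeasure η := isFiniteMeasure_of_le μ (hμ ▸ Measure.le_add_right le_rfl)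
  have : IsFiniteMeasure ρ₁ := isFiniteMeasure_of_le μ hρ₁
  have : IsFiniteMeasure ρ₂ := isFiniteMeasure_of_le ν hρ₂
  have hmass : ρ₁ univ = ρ₂ univ := by
    refine (ENNReal.add_right_inj (measure_ne_top η univ)).1 ?_
    rw [← Measure.add_apply, ← Measure.add_apply, hμ, hν, measure_univ, measure_univ]
  set π := Measure.commonPartCoupling η ρ₁ ρ₂
  have hfst : π.map Prod.fst = μ := (Measure.map_fst_commonPartCoupling hmass).trans hμ
  have : IsProbabilityMeasure π :=
    (Measure.isProbabilityMeasure_map_iff measurable_fst.aemeasurable).1 (hfst ▸ ‹_›)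
  calc W2sq μ ν ≤ ∫ x, ‖x.1 - x.2‖ ^ 2 ∂π :=
        W2sq_le_integral hfst ((Measure.map_snd_commonPartCoupling hmass).trans hν)
    _ = (∫⁻ x, ENNReal.ofReal (dist x.1 x.2 ^ 2) ∂π).toReal := by
        simp_rw [dist_eq_norm]
        exact integral_eq_lintegral_of_nonneg_ae (ae_of_all _ fun _ => by positivity)
          (by fun_prop : Continuous fun x : _ × _ => ‖x.1 - x.2‖ ^ 2).aestronglyMeasurable
    _ ≤ (ENNReal.ofReal (Metric.diam K ^ 2) * ρ₁ univ).toReal :=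
        ENNReal.toReal_mono (by finiteness) <|
          Measure.lintegral_dist_sq_commonPartCoupling_le hmass hK
            (Measure.absolutelyContinuous_of_le hρ₁ hμK)
            (Measure.absolutelyContinuous_of_le hρ₂ hνK)
    _ = Metric.diam K ^ 2 * (ρ₁ univ).toReal := by
        rw [ENNReal.toReal_mul, ENNReal.toReal_ofReal (by positivity)]

theorem W2sq_le_diam_sq_mul_withDensity_rnDeriv_tsub [IsProbabilityMeasure μ]
    [IsProbabilityMeasure ν] {ξ : Measure (EuclideanSpace ℝ (Fin d))} [SigmaFinite ξ]
    (hμ : μ ≪ ξ) (hν : ν ≪ ξ) {K : Set (EuclideanSpace ℝ (Fin d))} (hK : Bornology.IsBounded K)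
    (hμK : μ Kᶜ = 0) (hνK : ν Kᶜ = 0) :
    W2sq μ ν ≤ Metric.diam K ^ 2 * (ξ.withDensity (μ.rnDeriv ξ - ν.rnDeriv ξ) univ).toReal := by
  have hf := Measure.measurable_rnDeriv μ ξ
  have hg := Measure.measurable_rnDeriv ν ξ
  refine W2sq_le_diam_sq_mul_of_add_eq (η := ξ.withDensity (μ.rnDeriv ξ ⊓ ν.rnDeriv ξ))
    (ρ₂ := ξ.withDensity (ν.rnDeriv ξ - μ.rnDeriv ξ)) ?_ ?_ hK hμK hνK
  · rw [withDensity_inf_add_withDensity_tsub hf hg, Measure.withDensity_rnDeriv_eq _ _ hμ]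
  · rw [inf_comm, withDensity_inf_add_withDensity_tsub hg hf,
      Measure.withDensity_rnDeriv_eq _ _ hν]

end Wasserstein

theorem abs_sub_le_sSup_image {X : Type*} {s : Set X} {f g : X → ℝ} {B : ℝ}
    (hB : ∀ x ∈ s, |f x| ≤ B ∧ |g x| ≤ B) {x : X} (hx : x ∈ s) :
    |f x - g x| ≤ sSup ((fun x => |f x - g x|) '' s) := by
  refine le_csSup ⟨B + B, ?_⟩ (mem_image_of_mem _ hx)
  rintro _ ⟨y, hy, rfl⟩
  linarith [abs_sub (f y) (g y), hB y hy]

theorem W2sq_le_sup_density_diff_general {d : ℕ}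
    (M : Set (EuclideanSpace ℝ (Fin d))) (hM : IsCompact M) :
    ∃ C > (0 : ℝ), ∀ (μ ν : Measure (EuclideanSpace ℝ (Fin d)))
      (fμ fν : EuclideanSpace ℝ (Fin d) → ℝ),
      IsProbabilityMeasure μ → IsProbabilityMeasure ν →
      μ Mᶜ = 0 → ν Mᶜ = 0 →
      (∀ x, 0 ≤ fμ x) → (∀ x, 0 ≤ fν x) →
      (∃ B : ℝ, ∀ x ∈ M, |fμ x| ≤ B ∧ |fν x| ≤ B) →
      μ = volume.withDensity (fun x => ENNReal.ofReal (fμ x)) →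
      ν = volume.withDensity (fun x => ENNReal.ofReal (fν x)) →
      W2sq μ ν ≤ C * (sSup ((fun x => |fμ x - fν x|) '' M) +
        (sSup ((fun x => |fμ x - fν x|) '' M)) ^ 2) := by
  refine ⟨Metric.diam M ^ 2 * volume.real M + 1, by positivity, ?_⟩
  intro μ ν fμ fν _ _ hμM hνM _ _ ⟨B, hB⟩ hμ hν
  set ε := sSup ((fun x => |fμ x - fν x|) '' M)
  have hε : ∀ x ∈ M, |fμ x - fν x| ≤ ε := fun x hx => abs_sub_le_sSup_image hB hx
  have hε0 : 0 ≤ ε := Real.sSup_nonneg (by rintro _ ⟨x, -, rfl⟩; positivity)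
  have hdens : ∀ x ∈ M, ENNReal.ofReal (fμ x) ≤ ENNReal.ofReal (fν x) + ENNReal.ofReal ε :=
    fun x hx => (ENNReal.ofReal_le_ofReal (by linarith [(abs_le.1 (hε x hx)).2])).trans
      ENNReal.ofReal_add_le
  have hμac : μ ≪ volume := hμ ▸ withDensity_absolutelyContinuous _ _
  have hνac : ν ≪ volume := hν ▸ withDensity_absolutelyContinuous _ _
  have hMm : MeasurableSet M := hM.isClosed.measurableSet
  have hexcess : volume.withDensity (μ.rnDeriv volume - ν.rnDeriv volume) univ ≤
      ENNReal.ofReal ε * volume M :=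
    withDensity_tsub_apply_univ_le hMm (by rwa [Measure.withDensity_rnDeriv_eq _ _ hμac])
      (ae_rnDeriv_le_rnDeriv_add_of_withDensity hμ hν hMm hdens)
  calc W2sq μ ν ≤ Metric.diam M ^ 2 *
        (volume.withDensity (μ.rnDeriv volume - ν.rnDeriv volume) univ).toReal :=
        W2sq_le_diam_sq_mul_withDensity_rnDeriv_tsub hμac hνac hM.isBounded hμM hνM
    _ ≤ Metric.diam M ^ 2 * (ENNReal.ofReal ε * volume M).toReal := by
        gcongr
        exact ENNReal.mul_ne_top ENNReal.ofReal_ne_top hM.measure_lt_top.ne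
    _ = Metric.diam M ^ 2 * volume.real M * ε := by
        rw [ENNReal.toReal_mul, ENNReal.toReal_ofReal hε0, measureReal_def]
        ring
    _ ≤ (Metric.diam M ^ 2 * volume.real M + 1) * (ε + ε ^ 2) := by
        have : 0 ≤ Metric.diam M ^ 2 * volume.real M := by positivity
        nlinarith

/-- For probability measures on a compact set `M` with bounded densities, there is a
constant `C` depending only on `M` such that
`W₂²(μ,ν) ≤ C(‖f_μ − f_ν‖_∞ + ‖f_μ − f_ν‖_∞²)`, the sup-norm being taken over `M`. -/
theorem W2sq_le_sup_density_diff {d : ℕ}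
    (M : Set (EuclideanSpace ℝ (Fin d))) (hM : IsCompact M) (hMne : M.Nonempty) :
    ∃ C > (0 : ℝ), ∀ (μ ν : Measure (EuclideanSpace ℝ (Fin d)))
      (fμ fν : EuclideanSpace ℝ (Fin d) → ℝ),
      IsProbabilityMeasure μ → IsProbabilityMeasure ν →
      μ Mᶜ = 0 → ν Mᶜ = 0 →
      (∀ x, 0 ≤ fμ x) → (∀ x, 0 ≤ fν x) →
      (∃ B : ℝ, ∀ x ∈ M, |fμ x| ≤ B ∧ |fν x| ≤ B) →
      μ = volume.withDensity (fun x => ENNReal.ofReal (fμ x)) →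
      ν = volume.withDensity (fun x => ENNReal.ofReal (fν x)) →
      W2sq μ ν ≤ C * (sSup ((fun x => |fμ x - fν x|) '' M) +
        (sSup ((fun x => |fμ x - fν x|) '' M)) ^ 2) :=
  W2sq_le_sup_density_diff_general M hM
end
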